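/- arXiv:1509.01773 — 4 statements merged into one kernel-verified Lean document; each statement's English description precedes it below -/
import Mathlib

section
/- Let I be an open interval and s: I → ℝ a strictly increasing continuous function (a scale function). Let F = { u ∈ L²(I, m) : u is absolutely continuous with respect to s with density du/ds ∈ L²(I, ds) and du/ds = 0 ds-a.e. on F₀ }, for a fixed measurable set F₀ ⊆ I, with E(u,v) = (1/2)∫_I (du/ds)(dv/ds) ds. Then (E, F) is a closed form: if {u_k} ⊆ F is Cauchy in the norm sqrt(E(u,u) + ‖u‖²_{L²(m)}), then u_k converges in that norm to some u ∈ F. -/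
open Filter MeasureTheory Set
open scoped Topology ENNReal

/-! The form norm dominates both `‖u‖_{L²(m)}` and `‖du/ds‖_{L²(ds)}`, so completeness of `L²`
yields limits `w` of the `u k` and `g` of their densities. Every bounded subinterval has finite
`ds`-measure, so `L²(ds)`-convergence of the densities gives convergence of their integrals over
subintervals. Along a subsequence `u k → w` pointwise `m`-a.e.; since `m` charges `I` this happens
at some point `x₀`, and then `u k` converges everywhere on `I` to a primitive `v` of `g`, with
`v = w` `m`-a.e. Vanishing `ds`-a.e. on `F₀` is a closed condition in `L²(ds)`, so it passes to
`g`. -/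

section L2

variable {α : Type*} {mα : MeasurableSpace α} {μ : Measure α}

theorem MeasureTheory.MemLp.integral_sq_eq_toReal_eLpNorm_sq {f : α → ℝ}
    (hf : MemLp f 2 μ) : ∫ x, f x ^ 2 ∂μ = (eLpNorm f 2 μ).toReal ^ 2 := by
  rw [← Lp.norm_toLp f hf, ← real_inner_self_eq_norm_sq, L2.inner_def]
  refine integral_congr_ae ?_
  filter_upwards [hf.coeFn_toLp] with x hx
  simp [hx, sq]

theorem tendsto_integral_sq_of_tendsto_eLpNorm {ι : Type*} {l : Filter ι} {f : ι → α → ℝ}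
    (hf : ∀ i, MemLp (f i) 2 μ) (h : Tendsto (fun i => eLpNorm (f i) 2 μ) l (𝓝 0)) :
    Tendsto (fun i => ∫ x, f i x ^ 2 ∂μ) l (𝓝 0) := by
  have h' := ((ENNReal.tendsto_toReal ENNReal.zero_ne_top).comp h).pow 2
  rw [ENNReal.toReal_zero, zero_pow two_ne_zero] at h'
  exact h'.congr fun i => ((hf i).integral_sq_eq_toReal_eLpNorm_sq).symm

theorem exists_memLp_tendsto_eLpNorm_of_cauchy {u : ℕ → α → ℝ} (hu : ∀ k, MemLp (u k) 2 μ)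
    (hcauchy : ∀ ε > 0, ∃ N, ∀ k ≥ N, ∀ l ≥ N, ∫ x, (u k x - u l x) ^ 2 ∂μ < ε) :
    ∃ w, MemLp w 2 μ ∧ Tendsto (fun k => eLpNorm (u k - w) 2 μ) atTop (𝓝 0) := by
  set U : ℕ → Lp ℝ 2 μ := fun k => (hu k).toLp (u k)
  have hdist : ∀ k l, dist (U k) (U l) ^ 2 = ∫ x, (u k x - u l x) ^ 2 ∂μ := fun k l => by
    rw [dist_eq_norm, ← MemLp.toLp_sub, Lp.norm_toLp,
      ← ((hu k).sub (hu l)).integral_sq_eq_toReal_eLpNorm_sq]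
    rfl
  have hU : CauchySeq U := Metric.cauchySeq_iff.2 fun ε hε => by
    obtain ⟨N, hN⟩ := hcauchy (ε ^ 2) (by positivity)
    refine ⟨N, fun k hk l hl => lt_of_pow_lt_pow_left₀ 2 hε.le ?_⟩
    rw [hdist]
    exact hN k hk l hl
  obtain ⟨W, hW⟩ := cauchySeq_tendsto_of_complete hU
  refine ⟨W, Lp.memLp W, (Lp.tendsto_Lp_iff_tendsto_eLpNorm'' u hu W (Lp.memLp W)).1 ?_⟩
  rwa [Lp.toLp_coeFn]

theorem tendsto_setIntegral_of_tendsto_eLpNorm {ι : Type*} {l : Filter ι} {p : ℝ≥0∞}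
    (hp : 1 ≤ p) {s : Set α} (hs : μ s ≠ ∞) {f : ι → α → ℝ} {g : α → ℝ}
    (hf : ∀ i, MemLp (f i) p μ) (hg : MemLp g p μ)
    (h : Tendsto (fun i => eLpNorm (f i - g) p μ) l (𝓝 0)) :
    Tendsto (fun i => ∫ x in s, f i x ∂μ) l (𝓝 (∫ x in s, g x ∂μ)) := by
  have : IsFiniteMeasure (μ.restrict s) := isFiniteMeasure_restrict.2 hs
  have hfs : ∀ i, MemLp (f i) p (μ.restrict s) := fun i => (hf i).restrict s
  set C := μ.restrict s univ ^ (1 / (1 : ℝ≥0∞).toReal - 1 / p.toReal)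
  have hexp : 0 ≤ 1 / (1 : ℝ≥0∞).toReal - 1 / p.toReal := by
    rcases eq_or_ne p ∞ with rfl | hp_top
    · simp
    · simp only [ENNReal.toReal_one, div_one, one_div, sub_nonneg]
      exact inv_le_one_of_one_le₀ (by simpa using ENNReal.toReal_mono hp_top hp)
  have hC : C ≠ ∞ := ENNReal.rpow_ne_top_of_nonneg hexp (by simpa)
  refine tendsto_integral_of_L1' g (hg.restrict s).1 (Eventually.of_forall fun i =>
    (hfs i).integrable hp) (tendsto_of_tendsto_of_tendsto_of_le_of_le tendsto_const_nhds
      (by simpa using ENNReal.Tendsto.mul_const h (Or.inr hC)) (fun _ => zero_le) fun i => ?_)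
  calc eLpNorm (f i - g) 1 (μ.restrict s)
      ≤ eLpNorm (f i - g) p (μ.restrict s) * C :=
        eLpNorm_le_eLpNorm_mul_rpow_measure_univ hp ((hfs i).1.sub (hg.restrict s).1)
    _ ≤ eLpNorm (f i - g) p μ * C := by gcongr; exact Measure.restrict_le_self

theorem ae_eq_zero_of_tendsto_eLpNorm_sub {E : Type*} [NormedAddCommGroup E] {ι : Type*}
    {l : Filter ι} [l.NeBot] {p : ℝ≥0∞} (hp : p ≠ 0) {ν : Measure α} (hνμ : ν ≤ μ)
    {f : ι → α → E} {g : α → E} (hg : AEStronglyMeasurable g μ) (hf : ∀ i, f i =ᵐ[ν] 0)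
    (h : Tendsto (fun i => eLpNorm (f i - g) p μ) l (𝓝 0)) : g =ᵐ[ν] 0 := by
  have hconst : ∀ i, eLpNorm (f i - g) p ν = eLpNorm g p ν := fun i => by
    rw [eLpNorm_congr_ae ((hf i).sub EventuallyEq.rfl), zero_sub, eLpNorm_neg]
  have hν : Tendsto (fun i => eLpNorm (f i - g) p ν) l (𝓝 0) :=
    tendsto_of_tendsto_of_tendsto_of_le_of_le tendsto_const_nhds h (fun _ => zero_le)
      fun i => eLpNorm_mono_measure _ hνμ
  simp only [hconst] at hν
  exact (eLpNorm_eq_zero_iff (hg.mono_measure hνμ) hp).1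
    (tendsto_nhds_unique tendsto_const_nhds hν)

end L2

/-- `v ≪ s` on `I` with `dv/ds = g`, where `ν = ds`. -/
def HasDensityOn (ν : Measure ℝ) (I : Set ℝ) (v g : ℝ → ℝ) : Prop :=
  ∀ x ∈ I, ∀ y ∈ I, x ≤ y → v y - v x = ∫ z in Ioo x y, g z ∂ν

theorem exists_hasDensityOn_tendsto_of_tendsto {ν : Measure ℝ} {I : Set ℝ} {ι : Type*}
    {l : Filter ι} [l.NeBot] {u f : ι → ℝ → ℝ} {g : ℝ → ℝ}
    (hu : ∀ i, HasDensityOn ν I (u i) (f i))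
    (hint : ∀ x ∈ I, ∀ y ∈ I, x ≤ y →
      Tendsto (fun i => ∫ z in Ioo x y, f i z ∂ν) l (𝓝 (∫ z in Ioo x y, g z ∂ν)))
    {x₀ c : ℝ} (hx₀ : x₀ ∈ I) (hc : Tendsto (fun i => u i x₀) l (𝓝 c)) :
    ∃ v, HasDensityOn ν I v g ∧ ∀ x ∈ I, Tendsto (fun i => u i x) l (𝓝 (v x)) := by
  have hdiff : ∀ x ∈ I, ∀ y ∈ I, ∃ L, Tendsto (fun i => u i y - u i x) l (𝓝 L) := by
    intro x hx y hy
    rcases le_total x y with hxy | hyx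
    · exact ⟨_, (hint x hx y hy hxy).congr fun i => (hu i x hx y hy hxy).symm⟩
    · refine ⟨_, (hint y hy x hx hyx).neg.congr fun i => ?_⟩
      rw [← hu i y hy x hx hyx, neg_sub]
  have hlim : ∀ x ∈ I, ∃ L, Tendsto (fun i => u i x) l (𝓝 L) := fun x hx => by
    obtain ⟨L, hL⟩ := hdiff x₀ hx₀ x hx
    exact ⟨c + L, (hc.add hL).congr fun i => add_sub_cancel _ _⟩
  choose! v hv using hlim
  exact ⟨v, fun x hx y hy hxy => tendsto_nhds_unique ((hv y hy).sub (hv x hx))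
    ((hint x hx y hy hxy).congr fun i => (hu i x hx y hy hxy).symm), hv⟩

theorem exists_hasDensityOn_ae_eq_of_tendstoInMeasure {m ν : Measure ℝ} {I : Set ℝ}
    (hI : MeasurableSet I) (hmI : m I ≠ 0) {u f : ℕ → ℝ → ℝ} {g w : ℝ → ℝ}
    (hu : ∀ k, HasDensityOn ν I (u k) (f k))
    (hint : ∀ x ∈ I, ∀ y ∈ I, x ≤ y →
      Tendsto (fun k => ∫ z in Ioo x y, f k z ∂ν) atTop (𝓝 (∫ z in Ioo x y, g z ∂ν)))
    (huw : TendstoInMeasure (m.restrict I) u atTop w) :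
    ∃ v, HasDensityOn ν I v g ∧ v =ᵐ[m.restrict I] w := by
  obtain ⟨φ, hφ, hφw⟩ := huw.exists_seq_tendsto_ae
  have : (ae (m.restrict I)).NeBot := ae_neBot.2 (Measure.restrict_eq_zero.not.2 hmI)
  obtain ⟨x₀, hx₀w, hx₀⟩ := (hφw.and (ae_restrict_mem hI)).exists
  obtain ⟨v, hvg, hv⟩ := exists_hasDensityOn_tendsto_of_tendsto (fun j => hu (φ j))
    (fun x hx y hy hxy => (hint x hx y hy hxy).comp hφ.tendsto_atTop) hx₀ hx₀w
  refine ⟨v, hvg, ?_⟩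
  filter_upwards [hφw, ae_restrict_mem hI] with x hxw hx
  exact tendsto_nhds_unique (hv x hx) hxw

theorem stmt8_general (a b : ℝ) (hab : a < b)
    (m ν : Measure ℝ)
    (hm : ∀ c d, a ≤ c → c < d → d ≤ b → 0 < m (Ioo c d))
    (s : ℝ → ℝ)
    (hν : ∀ x ∈ Ioo a b, ∀ y ∈ Ioo a b, x ≤ y → ν (Ioo x y) = ENNReal.ofReal (s y - s x))
    (F₀ : Set ℝ) (hF₀I : F₀ ⊆ Ioo a b)
    (u : ℕ → ℝ → ℝ) (f : ℕ → ℝ → ℝ)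
    (hL2u : ∀ k, MemLp (u k) 2 (m.restrict (Ioo a b)))
    (hL2f : ∀ k, MemLp (f k) 2 (ν.restrict (Ioo a b)))
    (hac : ∀ k, ∀ x ∈ Ioo a b, ∀ y ∈ Ioo a b, x ≤ y →
      u k y - u k x = ∫ z in Ioo x y, f k z ∂ν)
    (hvanish : ∀ k, ∀ᵐ z ∂ν.restrict F₀, f k z = 0)
    (hCauchy : ∀ ε > (0 : ℝ), ∃ N, ∀ k ≥ N, ∀ l ≥ N,
      (1 / 2) * (∫ z in Ioo a b, (f k z - f l z) ^ 2 ∂ν)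
        + ∫ z in Ioo a b, (u k z - u l z) ^ 2 ∂m < ε) :
    ∃ (v : ℝ → ℝ) (g : ℝ → ℝ),
      MemLp v 2 (m.restrict (Ioo a b)) ∧
      MemLp g 2 (ν.restrict (Ioo a b)) ∧
      (∀ x ∈ Ioo a b, ∀ y ∈ Ioo a b, x ≤ y → v y - v x = ∫ z in Ioo x y, g z ∂ν) ∧
      (∀ᵐ z ∂ν.restrict F₀, g z = 0) ∧
      Tendsto (fun k => (1 / 2) * (∫ z in Ioo a b, (f k z - g z) ^ 2 ∂ν)
        + ∫ z in Ioo a b, (u k z - v z) ^ 2 ∂m) atTop (nhds 0) := by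
  have hsq : ∀ (μ : Measure ℝ) (h₁ h₂ : ℝ → ℝ), 0 ≤ ∫ z, (h₁ z - h₂ z) ^ 2 ∂μ :=
    fun μ h₁ h₂ => integral_nonneg fun z => sq_nonneg (h₁ z - h₂ z)
  obtain ⟨g, hg, hfg⟩ := exists_memLp_tendsto_eLpNorm_of_cauchy hL2f fun ε hε =>
    (hCauchy (ε / 2) (by positivity)).imp fun N hN k hk l hl => by
      linarith [hN k hk l hl, hsq (m.restrict (Ioo a b)) (u k) (u l)]
  obtain ⟨w, hw, huw⟩ := exists_memLp_tendsto_eLpNorm_of_cauchy hL2u fun ε hε =>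
    (hCauchy ε hε).imp fun N hN k hk l hl => by
      linarith [hN k hk l hl, hsq (ν.restrict (Ioo a b)) (f k) (f l)]
  have hint : ∀ x ∈ Ioo a b, ∀ y ∈ Ioo a b, x ≤ y →
      Tendsto (fun k => ∫ z in Ioo x y, f k z ∂ν) atTop (𝓝 (∫ z in Ioo x y, g z ∂ν)) :=
    fun x hx y hy hxy => by
      have hfin : ν.restrict (Ioo a b) (Ioo x y) ≠ ∞ :=
        ((Measure.restrict_apply_le _ _).trans_lt (hν x hx y hy hxy ▸ ENNReal.ofReal_lt_top)).ne
      simpa only [Measure.restrict_restrict_of_subset (Ioo_subset_Ioo hx.1.le hy.2.le)]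
        using tendsto_setIntegral_of_tendsto_eLpNorm one_le_two hfin hL2f hg hfg
  obtain ⟨v, hvg, hvw⟩ := exists_hasDensityOn_ae_eq_of_tendstoInMeasure measurableSet_Ioo
    (hm a b le_rfl hab le_rfl).ne' hac hint
    (tendstoInMeasure_of_tendsto_eLpNorm two_ne_zero (fun k => (hL2u k).1) hw.1 huw)
  have hv2 : MemLp v 2 (m.restrict (Ioo a b)) := hw.ae_eq hvw.symm
  have huv : Tendsto (fun k => eLpNorm (u k - v) 2 (m.restrict (Ioo a b))) atTop (𝓝 0) :=
    huw.congr fun k => eLpNorm_congr_ae (EventuallyEq.rfl.sub hvw.symm)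
  refine ⟨v, g, hv2, hg, hvg, ae_eq_zero_of_tendsto_eLpNorm_sub two_ne_zero
    (Measure.restrict_mono hF₀I le_rfl) hg.1 hvanish hfg, ?_⟩
  have hfg2 := tendsto_integral_sq_of_tendsto_eLpNorm (fun k => (hL2f k).sub hg) hfg
  have huv2 := tendsto_integral_sq_of_tendsto_eLpNorm (fun k => (hL2u k).sub hv2) huv
  simpa only [mul_zero, add_zero, Pi.sub_apply] using (hfg2.const_mul (1 / 2)).add huv2

/-- The form `E(u,v) = (1/2)∫ (du/ds)(dv/ds) ds` on functions absolutely continuous with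
respect to a scale function `s`, with density vanishing `ds`-a.e. on a fixed set `F₀`,
is closed: Cauchy sequences in the form norm converge in that norm to a member. -/
theorem stmt8 (a b : ℝ) (hab : a < b)
    (m ν : Measure ℝ) [IsLocallyFiniteMeasure m] [IsLocallyFiniteMeasure ν]
    (hm : ∀ c d, a ≤ c → c < d → d ≤ b → 0 < m (Ioo c d))
    (s : ℝ → ℝ) (hs : StrictMonoOn s (Ioo a b)) (hsc : ContinuousOn s (Ioo a b))
    (hν : ∀ x ∈ Ioo a b, ∀ y ∈ Ioo a b, x ≤ y → ν (Ioo x y) = ENNReal.ofReal (s y - s x))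
    (F₀ : Set ℝ) (hF₀ : MeasurableSet F₀) (hF₀I : F₀ ⊆ Ioo a b)
    (u : ℕ → ℝ → ℝ) (f : ℕ → ℝ → ℝ)
    (hL2u : ∀ k, MemLp (u k) 2 (m.restrict (Ioo a b)))
    (hL2f : ∀ k, MemLp (f k) 2 (ν.restrict (Ioo a b)))
    (hac : ∀ k, ∀ x ∈ Ioo a b, ∀ y ∈ Ioo a b, x ≤ y →
      u k y - u k x = ∫ z in Ioo x y, f k z ∂ν)
    (hvanish : ∀ k, ∀ᵐ z ∂ν.restrict F₀, f k z = 0)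
    (hCauchy : ∀ ε > (0 : ℝ), ∃ N, ∀ k ≥ N, ∀ l ≥ N,
      (1 / 2) * (∫ z in Ioo a b, (f k z - f l z) ^ 2 ∂ν)
        + ∫ z in Ioo a b, (u k z - u l z) ^ 2 ∂m < ε) :
    ∃ (v : ℝ → ℝ) (g : ℝ → ℝ),
      MemLp v 2 (m.restrict (Ioo a b)) ∧
      MemLp g 2 (ν.restrict (Ioo a b)) ∧
      (∀ x ∈ Ioo a b, ∀ y ∈ Ioo a b, x ≤ y → v y - v x = ∫ z in Ioo x y, g z ∂ν) ∧
      (∀ᵐ z ∂ν.restrict F₀, g z = 0) ∧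
      Tendsto (fun k => (1 / 2) * (∫ z in Ioo a b, (f k z - g z) ^ 2 ∂ν)
        + ∫ z in Ioo a b, (u k z - v z) ^ 2 ∂m) atTop (nhds 0) :=
  stmt8_general a b hab m ν hm s hν F₀ hF₀I u f hL2u hL2f hac hvanish hCauchy
end

section
/- Let I be an open interval, s a strictly increasing continuous function on I, and G ⊆ I a measurable set such that some nonempty open subinterval (c,d) ⊆ I satisfies ds(G ∩ (c,d)) = 0. Then any function u on I that is absolutely continuous with respect to s with density du/ds vanishing ds-a.e. on I ∖ G is constant on (c,d). Consequently, the family of such u ∈ L²(I,m) is not dense in L²(I,m) (for m a fully supported Radon measure on I). -/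
open Filter MeasureTheory Set

/-- If `ds(G ∩ (c,d)) = 0` for some subinterval `(c,d)`, then every function absolutely
continuous w.r.t. `s` whose density vanishes `ds`-a.e. off `G` is constant on `(c,d)`;
consequently the family of such `u ∈ L²(I,m)` is not dense in `L²(I,m)`. -/
theorem stmt9 (a b c d : ℝ) (hac : a < c) (hcd : c < d) (hdb : d < b)
    (m ν : Measure ℝ) [IsLocallyFiniteMeasure m] [IsLocallyFiniteMeasure ν]
    (hm : ∀ x y, a ≤ x → x < y → y ≤ b → 0 < m (Ioo x y))
    (s : ℝ → ℝ) (hs : StrictMonoOn s (Ioo a b)) (hsc : ContinuousOn s (Ioo a b))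
    (hν : ∀ x ∈ Ioo a b, ∀ y ∈ Ioo a b, x ≤ y → ν (Ioo x y) = ENNReal.ofReal (s y - s x))
    (G : Set ℝ) (hG : MeasurableSet G) (hGI : G ⊆ Ioo a b)
    (hGcd : ν (G ∩ Ioo c d) = 0) :
    (∀ u f : ℝ → ℝ,
      (∀ x ∈ Ioo a b, ∀ y ∈ Ioo a b, x ≤ y →
        u y - u x = ∫ z in Ioo x y, G.indicator f z ∂ν) →
      ∀ x ∈ Ioo c d, ∀ y ∈ Ioo c d, u x = u y) ∧
    ¬ (∀ g : ℝ → ℝ, MemLp g 2 (m.restrict (Ioo a b)) → ∀ ε > (0 : ℝ),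
        ∃ u f : ℝ → ℝ, MemLp u 2 (m.restrict (Ioo a b)) ∧
          (∀ x ∈ Ioo a b, ∀ y ∈ Ioo a b, x ≤ y →
            u y - u x = ∫ z in Ioo x y, G.indicator f z ∂ν) ∧
          ∫ z in Ioo a b, (u z - g z) ^ 2 ∂m < ε) := by
  have hcdab : Ioo c d ⊆ Ioo a b := Ioo_subset_Ioo hac.le hdb.le
  -- Part 1
  have key : ∀ u f : ℝ → ℝ,
      (∀ x ∈ Ioo a b, ∀ y ∈ Ioo a b, x ≤ y →
        u y - u x = ∫ z in Ioo x y, G.indicator f z ∂ν) →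
      ∀ x ∈ Ioo c d, ∀ y ∈ Ioo c d, u x = u y := by
    intro u f hu
    have main : ∀ x ∈ Ioo c d, ∀ y ∈ Ioo c d, x ≤ y → u x = u y := by
      intro x hx y hy hxy
      have h0 : u y - u x = ∫ z in Ioo x y, G.indicator f z ∂ν :=
        hu x (hcdab hx) y (hcdab hy) hxy
      have hxycd : Ioo x y ⊆ Ioo c d := Ioo_subset_Ioo hx.1.le hy.2.le
      have hae : (fun z => G.indicator f z) =ᵐ[ν.restrict (Ioo x y)] 0 := by
        rw [Filter.EventuallyEq, ae_iff]
        have hsub : {z | ¬ G.indicator f z = (0:ℝ→ℝ) z} ∩ Ioo x y ⊆ G ∩ Ioo c d := by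
          intro z hz
          rcases hz with ⟨hz1, hz2⟩
          by_cases hzG : z ∈ G
          · exact ⟨hzG, hxycd hz2⟩
          · exact absurd (Set.indicator_of_notMem hzG f) hz1
        refine le_antisymm ?_ zero_le
        calc (ν.restrict (Ioo x y)) {z | ¬ G.indicator f z = (0:ℝ→ℝ) z}
            = ν ({z | ¬ G.indicator f z = (0:ℝ→ℝ) z} ∩ Ioo x y) :=
              Measure.restrict_apply' measurableSet_Ioo
          _ ≤ ν (G ∩ Ioo c d) := measure_mono hsub
          _ = 0 := hGcd
          _ ≤ 0 := le_refl _
      have : u y - u x = 0 := by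
        rw [h0, integral_congr_ae hae]; simp
      linarith
    intro x hx y hy
    rcases le_total x y with h | h
    · exact main x hx y hy h
    · exact (main y hy x hx h).symm
  refine ⟨key, ?_⟩
  -- Part 2
  intro H
  set mid : ℝ := (c + d) / 2 with hmid
  have hcm : c < mid := by simp only [hmid]; linarith
  have hmd : mid < d := by simp only [hmid]; linarith
  set μ := m.restrict (Ioo a b) with hμ
  have hm1pos : 0 < m (Ioo c mid) := hm c mid hac.le hcm (by linarith)
  have hm2pos : 0 < m (Ioo mid d) := hm mid d (by linarith) hmd hdb.le
  have hm1fin : m (Ioo c mid) < ⊤ := measure_Ioo_lt_top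
  have hm2fin : m (Ioo mid d) < ⊤ := measure_Ioo_lt_top
  set m₁ : ℝ := (m (Ioo c mid)).toReal with hm₁
  set m₂ : ℝ := (m (Ioo mid d)).toReal with hm₂
  have hm₁pos : 0 < m₁ := ENNReal.toReal_pos hm1pos.ne' hm1fin.ne
  have hm₂pos : 0 < m₂ := ENNReal.toReal_pos hm2pos.ne' hm2fin.ne
  set ε : ℝ := min m₁ m₂ / 2 with hε
  have hεpos : 0 < ε := by positivity
  set g : ℝ → ℝ := (Ioo c mid).indicator (fun _ => (1:ℝ)) with hg
  have hgL2 : MemLp g 2 μ := by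
    apply memLp_indicator_const 2 measurableSet_Ioo
    right
    exact ((Measure.restrict_apply_le _ _).trans_lt hm1fin).ne
  obtain ⟨u, f, huL2, hu, hlt⟩ := H g hgL2 ε hεpos
  -- u is constant K on Ioo c d
  have hmidcd : mid ∈ Ioo c d := ⟨hcm, hmd⟩
  set K : ℝ := u mid with hK
  have hconst : ∀ z ∈ Ioo c d, u z = K := fun z hz => key u f hu z hz mid hmidcd
  -- integrability of (u-g)^2 on Ioo a b
  have hint : IntegrableOn (fun z => (u z - g z) ^ 2) (Ioo a b) m := by
    have : MemLp (fun z => u z - g z) 2 μ := huL2.sub hgL2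
    exact this.integrable_sq
  have hint1 : IntegrableOn (fun z => (u z - g z) ^ 2) (Ioo c mid) m :=
    hint.mono_set (fun z hz => hcdab ⟨hz.1, hz.2.trans hmd⟩)
  have hint2 : IntegrableOn (fun z => (u z - g z) ^ 2) (Ioo mid d) m :=
    hint.mono_set (fun z hz => hcdab ⟨hcm.trans hz.1, hz.2⟩)
  -- compute integrals over the two halves
  have hI1 : ∫ z in Ioo c mid, (u z - g z) ^ 2 ∂m = (K - 1) ^ 2 * m₁ := by
    rw [setIntegral_congr_fun (g := fun _ => (K - 1) ^ 2) measurableSet_Ioo]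
    · rw [setIntegral_const]; rw [smul_eq_mul]; simp only [Measure.real, hm₁]; ring
    · intro z hz
      have h1 : u z = K := hconst z ⟨hz.1, hz.2.trans hmd⟩
      have h2 : g z = 1 := Set.indicator_of_mem hz _
      simp [h1, h2]
  have hI2 : ∫ z in Ioo mid d, (u z - g z) ^ 2 ∂m = K ^ 2 * m₂ := by
    rw [setIntegral_congr_fun (g := fun _ => K ^ 2) measurableSet_Ioo]
    · rw [setIntegral_const]; rw [smul_eq_mul]; simp only [Measure.real, hm₂]; ring
    · intro z hz
      have h1 : u z = K := hconst z ⟨hcm.trans hz.1, hz.2⟩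
      have h2 : g z = 0 := by
        apply Set.indicator_of_notMem
        intro hmem
        exact absurd hz.1 (not_lt.mpr hmem.2.le)
      simp [h1, h2]
  -- lower bound
  have hdisj : Disjoint (Ioo c mid) (Ioo mid d) := by
    apply Set.disjoint_left.mpr
    intro z hz1 hz2
    exact absurd hz2.1 (not_lt.mpr hz1.2.le)
  have hunion : ∫ z in Ioo c mid ∪ Ioo mid d, (u z - g z) ^ 2 ∂m
      = (K - 1) ^ 2 * m₁ + K ^ 2 * m₂ := by
    rw [setIntegral_union hdisj measurableSet_Ioo hint1 hint2, hI1, hI2]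
  have hmono : ∫ z in Ioo c mid ∪ Ioo mid d, (u z - g z) ^ 2 ∂m
      ≤ ∫ z in Ioo a b, (u z - g z) ^ 2 ∂m := by
    apply setIntegral_mono_set hint
    · filter_upwards with z using sq_nonneg _
    · apply HasSubset.Subset.eventuallyLE
      intro z hz
      rcases hz with hz | hz
      · exact hcdab ⟨hz.1, hz.2.trans hmd⟩
      · exact hcdab ⟨hcm.trans hz.1, hz.2⟩
  have hlb : ε ≤ (K - 1) ^ 2 * m₁ + K ^ 2 * m₂ := by
    have h1 : min m₁ m₂ ≤ m₁ := min_le_left _ _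
    have h2 : min m₁ m₂ ≤ m₂ := min_le_right _ _
    have h3 : (1:ℝ)/2 ≤ (K - 1) ^ 2 + K ^ 2 := by nlinarith [sq_nonneg (2*K - 1)]
    have h4 : 0 < min m₁ m₂ := lt_min hm₁pos hm₂pos
    nlinarith [sq_nonneg (K - 1), sq_nonneg K]
  linarith [hunion ▸ hmono]
end

section
/- With notation as above (s_n, s_∞ defined from increasing sets G_n ↑ G via s_n(x) = ∫_e^x 1_{G_n} ds), let J_n = s_n(I) and J_∞ = s_∞(I) be the image intervals. Then J_n is an increasing sequence of open intervals and ⋃_n J_n = J_∞. -/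
/-!
Each `s_A(x) = ∫_e^x 1_A dν` is strictly increasing, vanishes at `e`, and is continuous because
`|s_A y - s_A x| ≤ |s y - s x|`. For `A ⊆ B` the value `s_A x` lies between `s_B e = 0` and
`s_B x`, so the intermediate value theorem gives `s_A(I) ⊆ s_B(I)`; this yields `J_n ⊆ J_{n+1}` and
`J_n ⊆ J_∞`. Conversely `s_n → s_∞` pointwise by continuity of measure, so for `x₁ < x < x₂` in `I`
the value `s_∞ x` lies in `(s_n x₁, s_n x₂) ⊆ J_n` once `n` is large.
-/

open Filter MeasureTheory Set Topology

theorem exists_lt_lt_of_mem_Ioo {α : Type*} [LinearOrder α] [DenselyOrdered α] {a b x : α}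
    (hx : x ∈ Ioo a b) : ∃ x₁ ∈ Ioo a b, ∃ x₂ ∈ Ioo a b, x₁ < x ∧ x < x₂ := by
  obtain ⟨x₁, hax₁, hx₁x⟩ := exists_between hx.1
  obtain ⟨x₂, hxx₂, hx₂b⟩ := exists_between hx.2
  exact ⟨x₁, ⟨hax₁, hx₁x.trans hx.2⟩, x₂, ⟨hx.1.trans hxx₂, hx₂b⟩, hx₁x, hxx₂⟩

section IntermediateValue

variable {α δ : Type*} [ConditionallyCompleteLinearOrder α] [TopologicalSpace α] [OrderTopology α]
  [DenselyOrdered α] [LinearOrder δ] [TopologicalSpace δ]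

theorem image_subset_image_of_mem_uIcc [OrderClosedTopology δ] {S : Set α} (hS : OrdConnected S)
    {f g : α → δ} {e : α} (he : e ∈ S) (hg : ContinuousOn g S)
    (hfg : ∀ x ∈ S, f x ∈ uIcc (g e) (g x)) : f '' S ⊆ g '' S := by
  rintro _ ⟨x, hx, rfl⟩
  have hsub := hS.uIcc_subset he hx
  exact image_mono hsub (intermediate_value_uIcc (hg.mono hsub) (hfg x hx))

theorem exists_mem_image_of_tendsto [OrderTopology δ] {ι : Type*} {l : Filter ι} [l.NeBot]
    {S : Set α} (hS : OrdConnected S) {F : ι → α → δ} (hF : ∀ i, ContinuousOn (F i) S)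
    {x₁ x₂ : α} (h₁ : x₁ ∈ S) (h₂ : x₂ ∈ S) {u₁ u₂ y : δ}
    (ht₁ : Tendsto (F · x₁) l (𝓝 u₁)) (ht₂ : Tendsto (F · x₂) l (𝓝 u₂)) (hy : y ∈ Ioo u₁ u₂) :
    ∃ i, y ∈ F i '' S := by
  obtain ⟨i, hi₁, hi₂⟩ :=
    ((ht₁.eventually (gt_mem_nhds hy.1)).and (ht₂.eventually (lt_mem_nhds hy.2))).exists
  have hsub := hS.uIcc_subset h₁ h₂
  exact ⟨i, image_mono hsub
    (intermediate_value_uIcc ((hF i).mono hsub) (Icc_subset_uIcc ⟨hi₁.le, hi₂.le⟩))⟩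

theorem StrictMonoOn.isOpen_image_Ioo [OrderTopology δ] {a b : α} {f : α → δ}
    (hf : StrictMonoOn f (Ioo a b)) (hc : ContinuousOn f (Ioo a b)) : IsOpen (f '' Ioo a b) := by
  have hord := (isPreconnected_Ioo.image f hc).ordConnected
  refine isOpen_iff_mem_nhds.2 ?_
  rintro _ ⟨x, hx, rfl⟩
  obtain ⟨x₁, h₁, x₂, h₂, hx₁x, hxx₂⟩ := exists_lt_lt_of_mem_Ioo hx
  exact mem_of_superset (Ioo_mem_nhds (hf h₁ hx hx₁x) (hf hx h₂ hxx₂))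
    (Ioo_subset_Icc_self.trans (hord.out (mem_image_of_mem f h₁) (mem_image_of_mem f h₂)))

end IntermediateValue

theorem ContinuousWithinAt.of_dist_le {α β γ : Type*} [TopologicalSpace α] [PseudoMetricSpace β]
    [PseudoMetricSpace γ] {f : α → β} {g : α → γ} {S : Set α} {x : α}
    (hg : ContinuousWithinAt g S x) (h : ∀ y ∈ S, dist (f y) (f x) ≤ dist (g y) (g x)) :
    ContinuousWithinAt f S x := by
  rw [ContinuousWithinAt, tendsto_iff_dist_tendsto_zero] at hg ⊢
  exact squeeze_zero' (Eventually.of_forall fun _ => dist_nonneg)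
    (eventually_nhdsWithin_of_forall h) hg

/-- The paper's `s_A(x) = ∫_e^x 1_A dν`, signed according to the position of `x` relative to `e`. -/
def IsIndicatorPrimitive (ν : Measure ℝ) (A : Set ℝ) (e : ℝ) (f : ℝ → ℝ) : Prop :=
  ∀ x, (e ≤ x → f x = ν.real (A ∩ Ioc e x)) ∧ (x ≤ e → f x = -ν.real (A ∩ Ioc x e))

theorem IsIndicatorPrimitive.apply_self {ν : Measure ℝ} {A : Set ℝ} {e : ℝ} {f : ℝ → ℝ}
    (hf : IsIndicatorPrimitive ν A e f) : f e = 0 := by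
  simp [(hf e).1 le_rfl]

section IndicatorPrimitive

variable {ν : Measure ℝ} [IsLocallyFiniteMeasure ν] {A B : Set ℝ} {e x y : ℝ}

theorem measure_inter_Ioc_ne_top (A : Set ℝ) (x y : ℝ) : ν (A ∩ Ioc x y) ≠ ⊤ :=
  ((measure_mono inter_subset_right).trans_lt measure_Ioc_lt_top).ne

theorem measureReal_inter_Ioc_add (hA : MeasurableSet A) {u v w : ℝ} (huv : u ≤ v) (hvw : v ≤ w) :
    ν.real (A ∩ Ioc u w) = ν.real (A ∩ Ioc u v) + ν.real (A ∩ Ioc v w) := by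
  rw [← Ioc_union_Ioc_eq_Ioc huv hvw, inter_union_distrib_left]
  exact measureReal_union ((Ioc_disjoint_Ioc_of_le le_rfl).mono inter_subset_right
    inter_subset_right) (hA.inter measurableSet_Ioc)
    (measure_inter_Ioc_ne_top _ _ _) (measure_inter_Ioc_ne_top _ _ _)

theorem tendsto_measureReal_iUnion_inter_Ioc {ι : Type*} [Preorder ι]
    [IsCountablyGenerated (atTop : Filter ι)] {A : ι → Set ℝ} (hA : Monotone A) (x y : ℝ) :
    Tendsto (fun i => ν.real (A i ∩ Ioc x y)) atTop (𝓝 (ν.real ((⋃ i, A i) ∩ Ioc x y))) := by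
  have h := tendsto_measure_iUnion_atTop (μ := ν) fun i j hij =>
    inter_subset_inter_left (Ioc x y) (hA hij)
  rw [← iUnion_inter] at h
  exact (ENNReal.tendsto_toReal (measure_inter_Ioc_ne_top _ x y)).comp h

namespace IsIndicatorPrimitive

variable {f g s : ℝ → ℝ} {S : Set ℝ}

theorem sub_eq (hf : IsIndicatorPrimitive ν A e f) (hA : MeasurableSet A) (hxy : x ≤ y) :
    f y - f x = ν.real (A ∩ Ioc x y) := by
  rcases le_total y e with hye | hey
  · rw [(hf y).2 hye, (hf x).2 (hxy.trans hye), measureReal_inter_Ioc_add hA hxy hye]; ring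
  rcases le_total x e with hxe | hex
  · rw [(hf y).1 hey, (hf x).2 hxe, measureReal_inter_Ioc_add hA hxe hey]; ring
  · rw [(hf y).1 (hex.trans hxy), (hf x).1 hex, measureReal_inter_Ioc_add hA hex hxy]; ring

theorem monotone (hf : IsIndicatorPrimitive ν A e f) (hA : MeasurableSet A) : Monotone f :=
  fun _ _ hxy => sub_nonneg.1 ((hf.sub_eq hA hxy).symm ▸ measureReal_nonneg)

theorem strictMonoOn (hf : IsIndicatorPrimitive ν A e f) (hA : MeasurableSet A)
    (hpos : ∀ c ∈ S, ∀ d ∈ S, c < d → 0 < ν (A ∩ Ioo c d)) : StrictMonoOn f S := by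
  intro x hx y hy hxy
  have hpos' : 0 < ν (A ∩ Ioc x y) :=
    (hpos x hx y hy hxy).trans_le (measure_mono (inter_subset_inter_right _ Ioo_subset_Ioc_self))
  have : 0 < ν.real (A ∩ Ioc x y) := ENNReal.toReal_pos hpos'.ne' (measure_inter_Ioc_ne_top A x y)
  linarith [hf.sub_eq hA hxy.le]

theorem sub_le_sub (hf : IsIndicatorPrimitive ν A e f) (hA : MeasurableSet A) (hs : MonotoneOn s S)
    (hν : ∀ x ∈ S, ∀ y ∈ S, x ≤ y → ν (Ioc x y) = ENNReal.ofReal (s y - s x)) (hx : x ∈ S)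
    (hy : y ∈ S) (hxy : x ≤ y) : f y - f x ≤ s y - s x :=
  calc f y - f x = ν.real (A ∩ Ioc x y) := hf.sub_eq hA hxy
    _ ≤ ν.real (Ioc x y) := measureReal_mono inter_subset_right measure_Ioc_lt_top.ne
    _ = s y - s x := by
      rw [measureReal_def, hν x hx y hy hxy, ENNReal.toReal_ofReal (sub_nonneg.2 (hs hx hy hxy))]

theorem dist_le_dist (hf : IsIndicatorPrimitive ν A e f) (hA : MeasurableSet A)
    (hs : MonotoneOn s S)
    (hν : ∀ x ∈ S, ∀ y ∈ S, x ≤ y → ν (Ioc x y) = ENNReal.ofReal (s y - s x)) (hx : x ∈ S)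
    (hy : y ∈ S) : dist (f y) (f x) ≤ dist (s y) (s x) := by
  wlog hxy : x ≤ y generalizing x y
  · rw [dist_comm, dist_comm (s y)]
    exact this hy hx (le_of_not_ge hxy)
  rw [Real.dist_eq, Real.dist_eq, abs_of_nonneg (sub_nonneg.2 (hf.monotone hA hxy)),
    abs_of_nonneg (sub_nonneg.2 (hs hx hy hxy))]
  exact hf.sub_le_sub hA hs hν hx hy hxy

theorem continuousOn (hf : IsIndicatorPrimitive ν A e f) (hA : MeasurableSet A)
    (hs : MonotoneOn s S)
    (hν : ∀ x ∈ S, ∀ y ∈ S, x ≤ y → ν (Ioc x y) = ENNReal.ofReal (s y - s x))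
    (hsc : ContinuousOn s S) : ContinuousOn f S := fun x hx =>
  (hsc x hx).of_dist_le fun _ hy => hf.dist_le_dist hA hs hν hx hy

theorem mem_uIcc (hf : IsIndicatorPrimitive ν A e f) (hg : IsIndicatorPrimitive ν B e g)
    (hAB : A ⊆ B) (x : ℝ) : f x ∈ uIcc (g e) (g x) := by
  have hle : ∀ u v, ν.real (A ∩ Ioc u v) ≤ ν.real (B ∩ Ioc u v) := fun u v =>
    measureReal_mono (inter_subset_inter_left _ hAB) (measure_inter_Ioc_ne_top B u v)
  rw [hg.apply_self]
  rcases le_total e x with hex | hxe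
  · rw [(hf x).1 hex, (hg x).1 hex]
    exact Icc_subset_uIcc ⟨measureReal_nonneg, hle e x⟩
  · rw [(hf x).2 hxe, (hg x).2 hxe]
    exact Icc_subset_uIcc' ⟨neg_le_neg (hle x e), neg_nonpos.2 measureReal_nonneg⟩

theorem tendsto_iUnion {ι : Type*} [Preorder ι] [IsCountablyGenerated (atTop : Filter ι)]
    {A : ι → Set ℝ} {F : ι → ℝ → ℝ} (hA : Monotone A)
    (hF : ∀ i, IsIndicatorPrimitive ν (A i) e (F i))
    (hf : IsIndicatorPrimitive ν (⋃ i, A i) e f) (x : ℝ) :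
    Tendsto (F · x) atTop (𝓝 (f x)) := by
  rcases le_total e x with hex | hxe
  · simpa only [(hF _ x).1 hex, (hf x).1 hex] using tendsto_measureReal_iUnion_inter_Ioc hA e x
  · simpa only [(hF _ x).2 hxe, (hf x).2 hxe] using
      (tendsto_measureReal_iUnion_inter_Ioc hA x e).neg

end IsIndicatorPrimitive

end IndicatorPrimitive

theorem stmt14_general (a b e : ℝ) (he : e ∈ Ioo a b)
    (ν : Measure ℝ) [IsLocallyFiniteMeasure ν]
    (s : ℝ → ℝ) (hs : StrictMonoOn s (Ioo a b)) (hsc : ContinuousOn s (Ioo a b))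
    (hν : ∀ x ∈ Ioo a b, ∀ y ∈ Ioo a b, x ≤ y → ν (Ioc x y) = ENNReal.ofReal (s y - s x))
    (G : ℕ → Set ℝ) (Glim : Set ℝ)
    (hGm : ∀ n, MeasurableSet (G n))
    (hpos : ∀ n, ∀ c ∈ Ioo a b, ∀ d ∈ Ioo a b, c < d → 0 < ν (G n ∩ Ioo c d))
    (hmono : ∀ n, G n ⊆ G (n + 1)) (hunion : Glim = ⋃ n, G n)
    (sn : ℕ → ℝ → ℝ) (sinf : ℝ → ℝ)
    (hsn : ∀ n x, (e ≤ x → sn n x = (ν (G n ∩ Ioc e x)).toReal) ∧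
      (x ≤ e → sn n x = -(ν (G n ∩ Ioc x e)).toReal))
    (hsinf : ∀ x, (e ≤ x → sinf x = (ν (Glim ∩ Ioc e x)).toReal) ∧
      (x ≤ e → sinf x = -(ν (Glim ∩ Ioc x e)).toReal)) :
    (∀ n, sn n '' Ioo a b ⊆ sn (n + 1) '' Ioo a b) ∧
    (∀ n, IsOpen (sn n '' Ioo a b) ∧ OrdConnected (sn n '' Ioo a b)) ∧
    (⋃ n, sn n '' Ioo a b) = sinf '' Ioo a b := by
  subst hunion
  replace hsn : ∀ n, IsIndicatorPrimitive ν (G n) e (sn n) := hsn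
  replace hsinf : IsIndicatorPrimitive ν (⋃ n, G n) e sinf := hsinf
  have hGlim : MeasurableSet (⋃ n, G n) := .iUnion hGm
  have hcont : ∀ n, ContinuousOn (sn n) (Ioo a b) := fun n =>
    (hsn n).continuousOn (hGm n) hs.monotoneOn hν hsc
  have hmono_inf : StrictMonoOn sinf (Ioo a b) := hsinf.strictMonoOn hGlim fun c hc d hd hcd =>
    (hpos 0 c hc d hd hcd).trans_le (measure_mono (inter_subset_inter_left _ (subset_iUnion G 0)))
  have hcont_inf : ContinuousOn sinf (Ioo a b) := hsinf.continuousOn hGlim hs.monotoneOn hν hsc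
  have hJ_succ (n : ℕ) : sn n '' Ioo a b ⊆ sn (n + 1) '' Ioo a b :=
    image_subset_image_of_mem_uIcc ordConnected_Ioo he (hcont (n + 1))
      fun x _ => (hsn n).mem_uIcc (hsn (n + 1)) (hmono n) x
  have hJ_inf (n : ℕ) : sn n '' Ioo a b ⊆ sinf '' Ioo a b :=
    image_subset_image_of_mem_uIcc ordConnected_Ioo he hcont_inf
      fun x _ => (hsn n).mem_uIcc hsinf (subset_iUnion G n) x
  have hJ_interval (n : ℕ) : IsOpen (sn n '' Ioo a b) ∧ OrdConnected (sn n '' Ioo a b) :=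
    ⟨((hsn n).strictMonoOn (hGm n) (hpos n)).isOpen_image_Ioo (hcont n),
      (isPreconnected_Ioo.image _ (hcont n)).ordConnected⟩
  refine ⟨hJ_succ, hJ_interval, (iUnion_subset hJ_inf).antisymm ?_⟩
  rintro _ ⟨x, hx, rfl⟩
  obtain ⟨x₁, h₁, x₂, h₂, hx₁x, hxx₂⟩ := exists_lt_lt_of_mem_Ioo hx
  have htendsto := IsIndicatorPrimitive.tendsto_iUnion (monotone_nat_of_le_succ hmono) hsn hsinf
  exact mem_iUnion.2 (exists_mem_image_of_tendsto ordConnected_Ioo hcont h₁ h₂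
    (htendsto x₁) (htendsto x₂) ⟨hmono_inf h₁ hx hx₁x, hmono_inf hx h₂ hxx₂⟩)

/-- With `s_n` built from increasing characteristic sets `G_n ↑ G`, the image intervals
`J_n = s_n(I)` form an increasing sequence of open intervals whose union is `J_∞ = s_∞(I)`. -/
theorem stmt14 (a b e : ℝ) (hab : a < b) (he : e ∈ Ioo a b)
    (ν : Measure ℝ) [IsLocallyFiniteMeasure ν]
    (s : ℝ → ℝ) (hs : StrictMonoOn s (Ioo a b)) (hsc : ContinuousOn s (Ioo a b))
    (hν : ∀ x ∈ Ioo a b, ∀ y ∈ Ioo a b, x ≤ y → ν (Ioc x y) = ENNReal.ofReal (s y - s x))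
    (G : ℕ → Set ℝ) (Glim : Set ℝ)
    (hGm : ∀ n, MeasurableSet (G n)) (hGI : ∀ n, G n ⊆ Ioo a b)
    (hpos : ∀ n, ∀ c ∈ Ioo a b, ∀ d ∈ Ioo a b, c < d → 0 < ν (G n ∩ Ioo c d))
    (hmono : ∀ n, G n ⊆ G (n + 1)) (hunion : Glim = ⋃ n, G n)
    (sn : ℕ → ℝ → ℝ) (sinf : ℝ → ℝ)
    (hsn : ∀ n x, (e ≤ x → sn n x = (ν (G n ∩ Ioc e x)).toReal) ∧
      (x ≤ e → sn n x = -(ν (G n ∩ Ioc x e)).toReal))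
    (hsinf : ∀ x, (e ≤ x → sinf x = (ν (Glim ∩ Ioc e x)).toReal) ∧
      (x ≤ e → sinf x = -(ν (Glim ∩ Ioc x e)).toReal)) :
    (∀ n, sn n '' Ioo a b ⊆ sn (n + 1) '' Ioo a b) ∧
    (∀ n, IsOpen (sn n '' Ioo a b) ∧ OrdConnected (sn n '' Ioo a b)) ∧
    (⋃ n, sn n '' Ioo a b) = sinf '' Ioo a b :=
  stmt14_general a b e he ν s hs hsc hν G Glim hGm hpos hmono hunion sn sinf hsn hsinf
end

section
/- Let s₁, s₂ be strictly increasing continuous functions on an interval I with s₁(x) = ∫_e^x 1_{G₁} ds and s₂(x) = ∫_e^x 1_{G₂} ds, where G₁ ⊆ G₂ and there is a subinterval (c,d) with ds(G₁ ∩ (c,d)) < ds(G₂ ∩ (c,d)). If s₁ ∘ s₂^{-1} were continuously differentiable on (s₂(c), s₂(d)), a contradiction follows; i.e., the function s₁ ∘ s₂^{-1}, which equals x ↦ ∫_0^x 1_{s₂(G₁)}(z) dz on (s₂(c), s₂(d)), is not continuously differentiable there. -/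
open Filter MeasureTheory Set intervalIntegral
open Metric Topology

lemma symm_quot_tendsto (f : ℝ → ℝ) (x l : ℝ) (hD : HasDerivAt f l x) :
    Tendsto (fun r => (f (x + r) - f (x - r)) / (2 * r)) (𝓝[>] (0:ℝ)) (𝓝 l) := by
  have hs := hasDerivAt_iff_tendsto_slope.mp hD
  have hmem : ∀ᶠ r in 𝓝[>] (0:ℝ), 0 < r := eventually_mem_nhdsWithin
  have h1 : Tendsto (fun r : ℝ => (f (x + r) - f x) / r) (𝓝[>] (0:ℝ)) (𝓝 l) := by
    have hg : Tendsto (fun r : ℝ => x + r) (𝓝[>] (0:ℝ)) (𝓝[≠] x) := by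
      apply tendsto_nhdsWithin_of_tendsto_nhds_of_eventually_within
      · have : Tendsto (fun r : ℝ => x + r) (𝓝 (0:ℝ)) (𝓝 (x + 0)) :=
          (continuous_const.add continuous_id).tendsto 0
        simpa using this.mono_left nhdsWithin_le_nhds
      · filter_upwards [hmem] with r hr
        simp [ne_of_gt hr]
    have := hs.comp hg
    refine this.congr' ?_
    filter_upwards [hmem] with r hr
    simp only [Function.comp, slope_def_field]
    rw [div_eq_div_iff (by linarith) (by linarith)]
    ring
  have h2 : Tendsto (fun r : ℝ => (f x - f (x - r)) / r) (𝓝[>] (0:ℝ)) (𝓝 l) := by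
    have hg : Tendsto (fun r : ℝ => x - r) (𝓝[>] (0:ℝ)) (𝓝[≠] x) := by
      apply tendsto_nhdsWithin_of_tendsto_nhds_of_eventually_within
      · have : Tendsto (fun r : ℝ => x - r) (𝓝 (0:ℝ)) (𝓝 (x - 0)) :=
          (continuous_const.sub continuous_id).tendsto 0
        simpa using this.mono_left nhdsWithin_le_nhds
      · filter_upwards [hmem] with r hr
        simp only [mem_compl_iff, mem_singleton_iff]
        intro h; linarith
    have := hs.comp hg
    refine this.congr' ?_
    filter_upwards [hmem] with r hr
    simp only [Function.comp, slope_def_field]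
    rw [div_eq_div_iff (by linarith) (by linarith)]
    ring
  have h3 := (h1.add h2).div_const 2
  have : (l + l) / 2 = l := by ring
  rw [this] at h3
  refine h3.congr' ?_
  filter_upwards [hmem] with r hr
  rw [← add_div, div_div]
  ring_nf

lemma exists_density_point (T : Set ℝ) (hT : MeasurableSet T) (hpos : 0 < volume T) :
    ∃ x ∈ T, Tendsto (fun r => volume (T ∩ closedBall x r) / volume (closedBall x r))
      (𝓝[>] (0:ℝ)) (𝓝 1) := by
  have hae := Besicovitch.ae_tendsto_measure_inter_div volume T
  set A := {x : ℝ | Tendsto (fun r => volume (T ∩ closedBall x r) / volume (closedBall x r))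
      (𝓝[>] (0:ℝ)) (𝓝 1)} with hA
  have h0 : volume.restrict T Aᶜ = 0 := hae
  have h1 : volume.restrict T A = volume.restrict T univ := by
    have : A = univ \ Aᶜ := by simp
    rw [this, measure_diff_null h0]
  rw [Measure.restrict_apply_univ] at h1
  have h2 : volume (A ∩ T) ≠ 0 := by
    rw [← Measure.restrict_apply' hT, h1]; exact hpos.ne'
  obtain ⟨x, hxA, hxT⟩ := nonempty_of_measure_ne_zero h2
  exact ⟨x, hxT, hxA⟩

lemma aux_toReal_q (T : Set ℝ) (x : ℝ)
    (hdens : Tendsto (fun r => volume (T ∩ closedBall x r) / volume (closedBall x r))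
      (𝓝[>] (0:ℝ)) (𝓝 1)) :
    Tendsto (fun r => (volume (T ∩ closedBall x r) / volume (closedBall x r)).toReal)
      (𝓝[>] (0:ℝ)) (𝓝 1) := by
  have h := (ENNReal.tendsto_toReal (by simp : (1:ENNReal) ≠ ⊤)).comp hdens
  simp only [ENNReal.toReal_one] at h
  exact h

lemma q_formula (T : Set ℝ) (x r : ℝ) (hr : 0 < r) :
    (volume (T ∩ closedBall x r) / volume (closedBall x r)).toReal
      = (volume (T ∩ closedBall x r)).toReal / (2 * r) := by
  rw [ENNReal.toReal_div, Real.volume_closedBall, ENNReal.toReal_ofReal (by linarith)]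

lemma aux_deriv_one (f : ℝ → ℝ) (S T : Set ℝ) (x l : ℝ) (hST : T ⊆ S)
    (hfe : ∀ u v : ℝ, u ≤ v → f v - f u = (volume (S ∩ Ioc u v)).toReal)
    (hD : HasDerivAt f l x)
    (hdens : Tendsto (fun r => volume (T ∩ closedBall x r) / volume (closedBall x r))
      (𝓝[>] (0:ℝ)) (𝓝 1)) : l = 1 := by
  have hq := aux_toReal_q T x hdens
  have hmem : ∀ᶠ r in 𝓝[>] (0:ℝ), 0 < r := eventually_mem_nhdsWithin
  have hIocfin : ∀ r : ℝ, 0 < r → volume (S ∩ Ioc (x - r) (x + r)) ≤ ENNReal.ofReal (2 * r) := by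
    intro r hr
    calc volume (S ∩ Ioc (x - r) (x + r)) ≤ volume (Ioc (x - r) (x + r)) :=
          measure_mono inter_subset_right
      _ = ENNReal.ofReal (2 * r) := by rw [Real.volume_Ioc]; ring_nf
  have hlow : ∀ᶠ r in 𝓝[>] (0:ℝ),
      (volume (T ∩ closedBall x r) / volume (closedBall x r)).toReal
        ≤ (f (x + r) - f (x - r)) / (2 * r) := by
    filter_upwards [hmem] with r hr
    rw [q_formula T x r hr, hfe (x - r) (x + r) (by linarith)]
    have hsub : T ∩ closedBall x r ⊆ insert (x - r) (S ∩ Ioc (x - r) (x + r)) := by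
      intro z hz
      rcases hz with ⟨hzT, hzB⟩
      rw [Real.closedBall_eq_Icc] at hzB
      rcases eq_or_lt_of_le hzB.1 with h | h
      · exact Or.inl h.symm
      · exact Or.inr ⟨hST hzT, h, hzB.2⟩
    have hm : volume (T ∩ closedBall x r) ≤ volume (S ∩ Ioc (x - r) (x + r)) := by
      calc volume (T ∩ closedBall x r) ≤ volume (insert (x - r) (S ∩ Ioc (x - r) (x + r))) :=
            measure_mono hsub
        _ ≤ volume {x - r} + volume (S ∩ Ioc (x - r) (x + r)) := by
            rw [insert_eq]; exact measure_union_le _ _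
        _ = volume (S ∩ Ioc (x - r) (x + r)) := by simp
    apply div_le_div_of_nonneg_right ?_ (by linarith)
    · exact ENNReal.toReal_mono (by exact ne_top_of_le_ne_top ENNReal.ofReal_ne_top (hIocfin r hr)) hm
  have hhigh : ∀ᶠ r in 𝓝[>] (0:ℝ), (f (x + r) - f (x - r)) / (2 * r) ≤ 1 := by
    filter_upwards [hmem] with r hr
    rw [hfe (x - r) (x + r) (by linarith)]
    rw [div_le_one (by linarith)]
    calc (volume (S ∩ Ioc (x - r) (x + r))).toReal ≤ (ENNReal.ofReal (2 * r)).toReal :=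
          ENNReal.toReal_mono ENNReal.ofReal_ne_top (hIocfin r hr)
      _ = 2 * r := ENNReal.toReal_ofReal (by linarith)
  have := tendsto_of_tendsto_of_tendsto_of_le_of_le' hq tendsto_const_nhds hlow hhigh
  exact tendsto_nhds_unique (symm_quot_tendsto f x l hD) this

lemma aux_deriv_zero (f : ℝ → ℝ) (S T : Set ℝ) (x l : ℝ) (hT : MeasurableSet T)
    (hdisj : ∀ᶠ r in 𝓝[>] (0:ℝ), S ∩ Ioc (x - r) (x + r) ⊆ closedBall x r \ T)
    (hfe : ∀ u v : ℝ, u ≤ v → f v - f u = (volume (S ∩ Ioc u v)).toReal)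
    (hD : HasDerivAt f l x)
    (hdens : Tendsto (fun r => volume (T ∩ closedBall x r) / volume (closedBall x r))
      (𝓝[>] (0:ℝ)) (𝓝 1)) : l = 0 := by
  have hq := aux_toReal_q T x hdens
  have hq' : Tendsto (fun r => 1 - (volume (T ∩ closedBall x r) / volume (closedBall x r)).toReal)
      (𝓝[>] (0:ℝ)) (𝓝 0) := by
    have := (tendsto_const_nhds (x := (1:ℝ)) (f := 𝓝[>] (0:ℝ))).sub hq
    simpa using this
  have hmem : ∀ᶠ r in 𝓝[>] (0:ℝ), 0 < r := eventually_mem_nhdsWithin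
  have hlow : ∀ᶠ r in 𝓝[>] (0:ℝ), 0 ≤ (f (x + r) - f (x - r)) / (2 * r) := by
    filter_upwards [hmem] with r hr
    rw [hfe (x - r) (x + r) (by linarith)]
    positivity
  have hhigh : ∀ᶠ r in 𝓝[>] (0:ℝ), (f (x + r) - f (x - r)) / (2 * r)
      ≤ 1 - (volume (T ∩ closedBall x r) / volume (closedBall x r)).toReal := by
    filter_upwards [hmem, hdisj] with r hr hsub
    rw [hfe (x - r) (x + r) (by linarith), q_formula T x r hr]
    have hcb : volume (closedBall x r) = ENNReal.ofReal (2 * r) := Real.volume_closedBall x r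
    have hTfin : volume (T ∩ closedBall x r) ≠ ⊤ :=
      ne_top_of_le_ne_top (by rw [hcb]; exact ENNReal.ofReal_ne_top)
        (measure_mono inter_subset_right)
    have hdm : volume (closedBall x r \ T) = volume (closedBall x r) - volume (T ∩ closedBall x r) := by
      have : closedBall x r \ T = closedBall x r \ (T ∩ closedBall x r) :=
        (Set.diff_inter_self_eq_diff).symm
      rw [this]
      exact measure_diff inter_subset_right (hT.inter measurableSet_closedBall).nullMeasurableSet hTfin
    have hmle : volume (S ∩ Ioc (x - r) (x + r)) ≤ volume (closedBall x r) - volume (T ∩ closedBall x r) := by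
      rw [← hdm]; exact measure_mono hsub
    have h2 : (volume (S ∩ Ioc (x - r) (x + r))).toReal ≤ 2 * r - (volume (T ∩ closedBall x r)).toReal := by
      have := ENNReal.toReal_mono ?_ hmle
      · rw [ENNReal.toReal_sub_of_le (measure_mono inter_subset_right) (by rw [hcb]; exact ENNReal.ofReal_ne_top), hcb, ENNReal.toReal_ofReal (by linarith)] at this
        exact this
      · rw [hcb]
        exact ne_top_of_le_ne_top ENNReal.ofReal_ne_top tsub_le_self
    rw [div_le_iff₀ (by linarith)]
    rw [sub_mul, div_mul_cancel₀ _ (by linarith : (2:ℝ) * r ≠ 0), one_mul]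
    linarith
  have := tendsto_of_tendsto_of_tendsto_of_le_of_le' tendsto_const_nhds hq' hlow hhigh
  exact tendsto_nhds_unique (symm_quot_tendsto f x l hD) this

lemma diff_formula (a b e : ℝ) (ν : Measure ℝ) (G : Set ℝ) (hGm : MeasurableSet G)
    (σ : ℝ → ℝ) (he : e ∈ Ioo a b)
    (hfin : ∀ x ∈ Ioo a b, ∀ y ∈ Ioo a b, ν (G ∩ Ioc x y) ≠ ⊤)
    (hσ : ∀ x, (e ≤ x → σ x = (ν (G ∩ Ioc e x)).toReal) ∧
      (x ≤ e → σ x = -(ν (G ∩ Ioc x e)).toReal)) :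
    ∀ x ∈ Ioo a b, ∀ y ∈ Ioo a b, x ≤ y → σ y - σ x = (ν (G ∩ Ioc x y)).toReal := by
  have hadd : ∀ u v w : ℝ, u ∈ Ioo a b → v ∈ Ioo a b → w ∈ Ioo a b → u ≤ v → v ≤ w →
      (ν (G ∩ Ioc u w)).toReal = (ν (G ∩ Ioc u v)).toReal + (ν (G ∩ Ioc v w)).toReal := by
    intro u v w hu hv hw huv hvw
    have hsplit : G ∩ Ioc u w = (G ∩ Ioc u v) ∪ (G ∩ Ioc v w) := by
      rw [← inter_union_distrib_left, Ioc_union_Ioc_eq_Ioc huv hvw]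
    rw [hsplit, measure_union ?_ (hGm.inter measurableSet_Ioc),
      ENNReal.toReal_add (hfin u hu v hv) (hfin v hv w hw)]
    exact (Set.Ioc_disjoint_Ioc_of_le le_rfl).mono inter_subset_right inter_subset_right
  intro x hx y hy hxy
  rcases le_total e x with hex | hxe
  · rw [(hσ y).1 (hex.trans hxy), (hσ x).1 hex]
    have := hadd e x y he hx hy hex hxy
    linarith
  · rcases le_total y e with hye | hey
    · rw [(hσ y).2 hye, (hσ x).2 (hxy.trans hye)]
      have := hadd x y e hx hy he hxy hye
      linarith
    · rw [(hσ y).1 hey, (hσ x).2 hxe]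
      have := hadd x e y hx he hy hxe hey
      linarith

lemma key_push (ν : Measure ℝ) (a b c' d' : ℝ) (hac : a < c') (hcd : c' < d') (hdb : d' < b)
    (σ : ℝ → ℝ) (hmono : StrictMonoOn σ (Ioo a b)) (hcont : ContinuousOn σ (Ioo a b))
    (G₂ : Set ℝ) (hG₂I : G₂ ⊆ Ioo a b)
    (hd₂ : ∀ x ∈ Icc c' d', ∀ y ∈ Icc c' d', x ≤ y → σ y - σ x = (ν (G₂ ∩ Ioc x y)).toReal)
    (hfin : ∀ x ∈ Icc c' d', ∀ y ∈ Icc c' d', ν (G₂ ∩ Ioc x y) ≠ ⊤)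
    (T : Set ℝ) (hTm : MeasurableSet T) (hTsub : T ⊆ G₂) :
    ∀ u ∈ Icc c' d', ∀ v ∈ Icc c' d',
      volume (σ '' T ∩ Ioc (σ u) (σ v)) = ν (T ∩ Ioc u v) := by
  have hIO : Icc c' d' ⊆ Ioo a b := fun x hx => ⟨lt_of_lt_of_le hac hx.1, lt_of_le_of_lt hx.2 hdb⟩
  have m : MonotoneOn σ (Ioo a b) := hmono.monotoneOn
  set g : ℝ → ℝ := fun z => sSup (insert c' {x | x ∈ Icc c' d' ∧ σ x ≤ z}) with hg
  have hbdd : ∀ z : ℝ, BddAbove (insert c' {x | x ∈ Icc c' d' ∧ σ x ≤ z}) := by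
    intro z
    refine ⟨d', ?_⟩
    rintro x (rfl | ⟨hx, _⟩)
    · exact hcd.le
    · exact hx.2
  have hne : ∀ z : ℝ, (insert c' {x | x ∈ Icc c' d' ∧ σ x ≤ z}).Nonempty :=
    fun z => ⟨c', mem_insert _ _⟩
  have gmono : Monotone g := by
    intro z z' hzz
    apply csSup_le_csSup (hbdd z') (hne z)
    rintro x (rfl | ⟨hx, hσx⟩)
    · exact mem_insert _ _
    · exact Or.inr ⟨hx, hσx.trans hzz⟩
  have grange : ∀ z, g z ∈ Icc c' d' := by
    intro z
    constructor
    · exact le_csSup (hbdd z) (mem_insert _ _)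
    · apply csSup_le (hne z)
      rintro x (rfl | ⟨hx, _⟩)
      · exact hcd.le
      · exact hx.2
  have ginv : ∀ x ∈ Icc c' d', g (σ x) = x := by
    intro x hx
    have hset : insert c' {y | y ∈ Icc c' d' ∧ σ y ≤ σ x} = Icc c' x := by
      ext y
      simp only [mem_insert_iff, mem_setOf_eq, mem_Icc]
      constructor
      · rintro (rfl | ⟨⟨h1, h2⟩, hle⟩)
        · exact ⟨le_rfl, hx.1⟩
        · refine ⟨h1, ?_⟩
          by_contra hlt
          push_neg at hlt
          exact absurd (hmono (hIO hx) (hIO ⟨h1, h2⟩) hlt) (not_lt.mpr hle)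
      · rintro ⟨h1, h2⟩
        exact Or.inr ⟨⟨h1, h2.trans hx.2⟩, m (hIO ⟨h1, h2.trans hx.2⟩) (hIO hx) h2⟩
    rw [hg]
    simp only []
    rw [hset]
    exact csSup_Icc hx.1
  have hsurj : ∀ z ∈ Ioc (σ c') (σ d'), σ (g z) = z ∧ g z ∈ Ioc c' d' := by
    intro z hz
    obtain ⟨x, hxI, hxz⟩ := intermediate_value_Ioc hcd.le (hcont.mono (fun y hy => hIO hy)) hz
    have : g z = x := by rw [← hxz]; exact ginv x (Ioc_subset_Icc_self hxI)
    rw [this, hxz]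
    exact ⟨rfl, hxI⟩
  have hIocsub : ∀ u ∈ Icc c' d', ∀ v ∈ Icc c' d', Ioc (σ u) (σ v) ⊆ Ioc (σ c') (σ d') := by
    intro u hu v hv
    exact Ioc_subset_Ioc (m (hIO (left_mem_Icc.mpr hcd.le)) (hIO hu) hu.1)
      (m (hIO hv) (hIO (right_mem_Icc.mpr hcd.le)) hv.2)
  have hpre : ∀ u ∈ Icc c' d', ∀ v ∈ Icc c' d',
      g ⁻¹' (Ioc u v) ∩ Ioc (σ c') (σ d') = Ioc (σ u) (σ v) := by
    intro u hu v hv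
    ext z
    simp only [mem_inter_iff, mem_preimage, mem_Ioc]
    constructor
    · rintro ⟨⟨hugz, hgzv⟩, hzI⟩
      obtain ⟨hσgz, hgzIoc⟩ := hsurj z hzI
      constructor
      · rw [← hσgz]
        exact hmono (hIO hu) (hIO (Ioc_subset_Icc_self hgzIoc)) hugz
      · rw [← hσgz]
        exact m (hIO (Ioc_subset_Icc_self hgzIoc)) (hIO hv) hgzv
    · intro hz
      have hzI : z ∈ Ioc (σ c') (σ d') := hIocsub u hu v hv hz
      obtain ⟨hσgz, hgzIoc⟩ := hsurj z hzI
      refine ⟨⟨?_, ?_⟩, hzI⟩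
      · by_contra hle
        push_neg at hle
        have := m (hIO (Ioc_subset_Icc_self hgzIoc)) (hIO hu) hle
        rw [hσgz] at this
        exact absurd hz.1 (not_lt.mpr this)
      · by_contra hle
        push_neg at hle
        have := hmono (hIO hv) (hIO (Ioc_subset_Icc_self hgzIoc)) hle
        rw [hσgz] at this
        exact absurd hz.2 (not_le.mpr this)
  have gmeas : Measurable g := gmono.measurable
  set I : Set ℝ := Ioc (σ c') (σ d') with hI
  set μ₁ : Measure ℝ := Measure.map g (volume.restrict I) with hμ₁
  set μ₂ : Measure ℝ := ν.restrict (G₂ ∩ Ioc c' d') with hμ₂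
  have hc'm : c' ∈ Icc c' d' := left_mem_Icc.mpr hcd.le
  have hd'm : d' ∈ Icc c' d' := right_mem_Icc.mpr hcd.le
  haveI : IsFiniteMeasure μ₁ := by
    constructor
    rw [hμ₁, Measure.map_apply gmeas MeasurableSet.univ, preimage_univ,
      Measure.restrict_apply_univ]
    exact measure_Ioc_lt_top
  haveI : IsFiniteMeasure μ₂ := by
    constructor
    rw [hμ₂, Measure.restrict_apply_univ]
    have h1 : G₂ ∩ Ioc c' d' = G₂ ∩ (G₂ ∩ Ioc c' d') := by rw [← inter_assoc, inter_self]
    rw [show G₂ ∩ Ioc c' d' = G₂ ∩ Ioc c' d' from rfl]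
    exact (hfin c' hc'm d' hd'm).lt_top
  have heq : μ₁ = μ₂ := by
    apply Measure.ext_of_Ioc
    intro x y hxy
    rw [hμ₁, hμ₂, Measure.map_apply gmeas measurableSet_Ioc,
      Measure.restrict_apply (gmeas measurableSet_Ioc),
      Measure.restrict_apply measurableSet_Ioc]
    by_cases hxd : x < d'
    · by_cases hcy : c' < y
      · -- main case
        set u' := max x c' with hu'
        set v' := min y d' with hv'
        have hu'm : u' ∈ Icc c' d' := ⟨le_max_right _ _, max_le hxd.le hcd.le⟩
        have hv'm : v' ∈ Icc c' d' := ⟨le_min hcy.le hcd.le, min_le_right _ _⟩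
        have hset : g ⁻¹' (Ioc x y) ∩ I = Ioc (σ u') (σ v') := by
          rw [← hpre u' hu'm v' hv'm]
          ext z
          simp only [mem_inter_iff, mem_preimage, mem_Ioc]
          constructor
          · rintro ⟨⟨h1, h2⟩, hzI⟩
            have hgz := (hsurj z hzI).2
            exact ⟨⟨max_lt h1 hgz.1, le_min h2 hgz.2⟩, hzI⟩
          · rintro ⟨⟨h1, h2⟩, hzI⟩
            exact ⟨⟨(le_max_left x c').trans_lt h1, h2.trans (min_le_left y d')⟩, hzI⟩
        rw [hset, Real.volume_Ioc]
        have hIocIoc : Ioc x y ∩ (G₂ ∩ Ioc c' d') = G₂ ∩ Ioc u' v' := by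
          rw [inter_comm (Ioc x y), inter_assoc, Ioc_inter_Ioc, sup_comm c' x, inf_comm d' y]
        rw [hIocIoc]
        by_cases huv : u' ≤ v'
        · rw [show σ v' - σ u' = (ν (G₂ ∩ Ioc u' v')).toReal from hd₂ u' hu'm v' hv'm huv]
          exact ENNReal.ofReal_toReal (hfin u' hu'm v' hv'm)
        · push_neg at huv
          rw [Ioc_eq_empty (not_lt.mpr huv.le), inter_empty, measure_empty]
          rw [ENNReal.ofReal_eq_zero]
          have := m (hIO hv'm) (hIO hu'm) huv.le
          linarith
      · -- y ≤ c'
        push_neg at hcy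
        have h1 : g ⁻¹' (Ioc x y) ∩ I = ∅ := by
          ext z
          simp only [mem_inter_iff, mem_preimage, mem_Ioc, mem_empty_iff_false, iff_false]
          rintro ⟨⟨_, h2⟩, hzI⟩
          exact absurd (h2.trans hcy) (not_le.mpr (hsurj z hzI).2.1)
        have h2 : Ioc x y ∩ (G₂ ∩ Ioc c' d') = ∅ := by
          ext z
          simp only [mem_inter_iff, mem_Ioc, mem_empty_iff_false, iff_false]
          rintro ⟨⟨_, h2⟩, _, h3, _⟩
          exact absurd (h2.trans hcy) (not_le.mpr h3)
        rw [h1, h2, measure_empty, measure_empty]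
    · -- d' ≤ x
      push_neg at hxd
      have h1 : g ⁻¹' (Ioc x y) ∩ I = ∅ := by
        ext z
        simp only [mem_inter_iff, mem_preimage, mem_Ioc, mem_empty_iff_false, iff_false]
        rintro ⟨⟨h1, _⟩, hzI⟩
        exact absurd ((hsurj z hzI).2.2.trans hxd) (not_le.mpr h1)
      have h2 : Ioc x y ∩ (G₂ ∩ Ioc c' d') = ∅ := by
        ext z
        simp only [mem_inter_iff, mem_Ioc, mem_empty_iff_false, iff_false]
        rintro ⟨⟨h1, _⟩, _, _, h4⟩
        exact absurd (h4.trans hxd) (not_le.mpr h1)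
      rw [h1, h2, measure_empty, measure_empty]
  -- final conclusion
  intro u hu v hv
  have hstep1 : σ '' T ∩ Ioc (σ u) (σ v) = g ⁻¹' T ∩ Ioc (σ u) (σ v) := by
    ext z
    simp only [mem_inter_iff, mem_preimage]
    constructor
    · rintro ⟨⟨w, hwT, rfl⟩, hz⟩
      have hzI : σ w ∈ I := hIocsub u hu v hv hz
      have hwI : w ∈ Ioo a b := hG₂I (hTsub hwT)
      have hwIcc : w ∈ Icc c' d' := by
        constructor
        · by_contra hle
          push_neg at hle
          have := m hwI (hIO hc'm) hle.le
          exact absurd hzI.1 (not_lt.mpr this)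
        · by_contra hle
          push_neg at hle
          have := hmono (hIO hd'm) hwI hle
          exact absurd hzI.2 (not_le.mpr this)
      rw [ginv w hwIcc]
      exact ⟨hwT, hz⟩
    · rintro ⟨hgzT, hz⟩
      have hzI : z ∈ I := hIocsub u hu v hv hz
      exact ⟨⟨g z, hgzT, (hsurj z hzI).1⟩, hz⟩
  have hstep2 : g ⁻¹' T ∩ Ioc (σ u) (σ v) = g ⁻¹' (T ∩ Ioc u v) ∩ I := by
    rw [preimage_inter, inter_assoc, hpre u hu v hv]
  rw [hstep1, hstep2]
  have hstep3 : volume (g ⁻¹' (T ∩ Ioc u v) ∩ I) = μ₁ (T ∩ Ioc u v) := by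
    rw [hμ₁, Measure.map_apply gmeas (hTm.inter measurableSet_Ioc),
      Measure.restrict_apply (gmeas (hTm.inter measurableSet_Ioc))]
  rw [hstep3, heq, hμ₂, Measure.restrict_apply (hTm.inter measurableSet_Ioc)]
  congr 1
  rw [inter_assoc]
  have : Ioc u v ∩ (G₂ ∩ Ioc c' d') = Ioc u v ∩ G₂ := by
    ext z
    simp only [mem_inter_iff, mem_Ioc]
    constructor
    · rintro ⟨h1, h2, _⟩; exact ⟨h1, h2⟩
    · rintro ⟨h1, h2⟩
      exact ⟨h1, h2, hu.1.trans_lt h1.1, h1.2.trans hv.2⟩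
  rw [this, inter_comm (Ioc u v), ← inter_assoc]
  have hTG : T ∩ G₂ = T := inter_eq_left.mpr hTsub
  rw [hTG]

/-- If `G₁ ⊆ G₂` and `ds(G₁ ∩ (c,d)) < ds(G₂ ∩ (c,d))`, then `s₁ ∘ s₂⁻¹`, which equals
`x ↦ ∫_0^x 1_{s₂(G₁)}(z) dz` on `(s₂(c), s₂(d))`, is not continuously differentiable there. -/
theorem stmt17 (a b c d e : ℝ) (hac : a < c) (hcd : c < d) (hdb : d < b)
    (he : e ∈ Ioo c d)
    (ν : Measure ℝ) [IsLocallyFiniteMeasure ν]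
    (s : ℝ → ℝ) (hs : StrictMonoOn s (Ioo a b)) (hsc : ContinuousOn s (Ioo a b))
    (hν : ∀ x ∈ Ioo a b, ∀ y ∈ Ioo a b, x ≤ y → ν (Ioc x y) = ENNReal.ofReal (s y - s x))
    (G₁ G₂ : Set ℝ) (hG₁m : MeasurableSet G₁) (hG₂m : MeasurableSet G₂)
    (hG₁I : G₁ ⊆ Ioo a b) (hG₂I : G₂ ⊆ Ioo a b) (hsub : G₁ ⊆ G₂)
    (hpos₁ : ∀ α ∈ Ioo a b, ∀ β ∈ Ioo a b, α < β → 0 < ν (G₁ ∩ Ioo α β))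
    (hpos₂ : ∀ α ∈ Ioo a b, ∀ β ∈ Ioo a b, α < β → 0 < ν (G₂ ∩ Ioo α β))
    (hlt : ν (G₁ ∩ Ioo c d) < ν (G₂ ∩ Ioo c d))
    (s₁ s₂ : ℝ → ℝ)
    (hs₁ : ∀ x, (e ≤ x → s₁ x = (ν (G₁ ∩ Ioc e x)).toReal) ∧
      (x ≤ e → s₁ x = -(ν (G₁ ∩ Ioc x e)).toReal))
    (hs₂ : ∀ x, (e ≤ x → s₂ x = (ν (G₂ ∩ Ioc e x)).toReal) ∧
      (x ≤ e → s₂ x = -(ν (G₂ ∩ Ioc x e)).toReal)) :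
    (∀ y ∈ Ioo c d,
      s₁ y = ∫ z in (0 : ℝ)..(s₂ y), (s₂ '' G₁).indicator (fun _ => (1 : ℝ)) z) ∧
    ¬ ContDiffOn ℝ 1
      (fun x => ∫ z in (0 : ℝ)..x, (s₂ '' G₁).indicator (fun _ => (1 : ℝ)) z)
      (Ioo (s₂ c) (s₂ d)) := by
  have hcab : c ∈ Ioo a b := ⟨hac, hcd.trans hdb⟩
  have hdab : d ∈ Ioo a b := ⟨hac.trans hcd, hdb⟩
  have heab : e ∈ Ioo a b := ⟨hac.trans he.1, he.2.trans hdb⟩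
  have hIoosub : Ioo c d ⊆ Ioo a b := fun x hx => ⟨hac.trans hx.1, hx.2.trans hdb⟩
  -- finiteness
  have hfinIoc : ∀ x ∈ Ioo a b, ∀ y ∈ Ioo a b, ν (Ioc x y) ≠ ⊤ := by
    intro x hx y hy
    rcases le_total x y with h | h
    · rw [hν x hx y hy h]; exact ENNReal.ofReal_ne_top
    · rw [Ioc_eq_empty (not_lt.mpr h), measure_empty]; exact ENNReal.zero_ne_top
  have hfin1 : ∀ x ∈ Ioo a b, ∀ y ∈ Ioo a b, ν (G₁ ∩ Ioc x y) ≠ ⊤ := fun x hx y hy =>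
    ne_top_of_le_ne_top (hfinIoc x hx y hy) (measure_mono inter_subset_right)
  have hfin2 : ∀ x ∈ Ioo a b, ∀ y ∈ Ioo a b, ν (G₂ ∩ Ioc x y) ≠ ⊤ := fun x hx y hy =>
    ne_top_of_le_ne_top (hfinIoc x hx y hy) (measure_mono inter_subset_right)
  have hd₁ := diff_formula a b e ν G₁ hG₁m s₁ heab hfin1 hs₁
  have hd₂ := diff_formula a b e ν G₂ hG₂m s₂ heab hfin2 hs₂
  -- strict monotonicity of s₂
  have hmono₂ : StrictMonoOn s₂ (Ioo a b) := by
    intro x hx y hy hxy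
    have h := hd₂ x hx y hy hxy.le
    have hpos := hpos₂ x hx y hy hxy
    have hle : ν (G₂ ∩ Ioo x y) ≤ ν (G₂ ∩ Ioc x y) :=
      measure_mono (inter_subset_inter_right _ Ioo_subset_Ioc_self)
    have h2 : 0 < (ν (G₂ ∩ Ioc x y)).toReal :=
      ENNReal.toReal_pos (lt_of_lt_of_le hpos hle).ne' (hfin2 x hx y hy)
    linarith
  have hm₂ : MonotoneOn s₂ (Ioo a b) := hmono₂.monotoneOn
  -- continuity of s₂
  have hcont₂ : ContinuousOn s₂ (Ioo a b) := by
    intro x hx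
    have hdist : ∀ y ∈ Ioo a b, dist (s₂ y) (s₂ x) ≤ dist (s y) (s x) := by
      intro y hy
      have key : ∀ u ∈ Ioo a b, ∀ v ∈ Ioo a b, u ≤ v → s₂ v - s₂ u ≤ s v - s u ∧ 0 ≤ s₂ v - s₂ u := by
        intro u hu v hv huv
        rw [hd₂ u hu v hv huv]
        constructor
        · have h1 : (ν (G₂ ∩ Ioc u v)).toReal ≤ (ν (Ioc u v)).toReal :=
            ENNReal.toReal_mono (hfinIoc u hu v hv) (measure_mono inter_subset_right)
          rw [hν u hu v hv huv, ENNReal.toReal_ofReal (by linarith [hs.monotoneOn hu hv huv] : (0:ℝ) ≤ s v - s u)] at h1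
          linarith
        · exact ENNReal.toReal_nonneg
      rcases le_total x y with h | h
      · obtain ⟨h1, h2⟩ := key x hx y hy h
        rw [Real.dist_eq, Real.dist_eq, abs_of_nonneg h2]
        exact h1.trans (le_abs_self _)
      · obtain ⟨h1, h2⟩ := key y hy x hx h
        rw [Real.dist_eq, Real.dist_eq, abs_sub_comm (s₂ y), abs_sub_comm (s y), abs_of_nonneg h2]
        exact h1.trans (le_abs_self _)
    have hs' : Tendsto (fun y => dist (s y) (s x)) (𝓝[Ioo a b] x) (𝓝 0) := by
      have h1 : Tendsto s (𝓝[Ioo a b] x) (𝓝 (s x)) := hsc x hx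
      have := h1.dist (tendsto_const_nhds (x := s x) (f := 𝓝[Ioo a b] x))
      simpa using this
    rw [ContinuousWithinAt, tendsto_iff_dist_tendsto_zero]
    apply squeeze_zero' (Eventually.of_forall fun y => dist_nonneg) ?_ hs'
    filter_upwards [eventually_mem_nhdsWithin] with y hy
    exact hdist y hy
  -- atoms
  have hatom : ∀ p ∈ Ioo a b, ν {p} = 0 := by
    intro p hp
    set q := max a (p - 1) with hq
    have hqp : q < p := max_lt hp.1 (by linarith)
    have hsubqp : Ioo q p ⊆ Ioo a b :=
      fun z hz => ⟨lt_of_le_of_lt (le_max_left a (p-1)) hz.1, hz.2.trans hp.2⟩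
    haveI hne : (𝓝[Ioo q p] p).NeBot := by
      apply mem_closure_iff_nhdsWithin_neBot.mp
      rw [closure_Ioo hqp.ne]
      exact ⟨hqp.le, le_rfl⟩
    have hev : ∀ᶠ x in 𝓝[Ioo q p] p, ν {p} ≤ ENNReal.ofReal (s p - s x) := by
      filter_upwards [eventually_mem_nhdsWithin] with x hxm
      rw [← hν x (hsubqp hxm) p hp hxm.2.le]
      apply measure_mono
      intro z hz
      rw [mem_singleton_iff] at hz
      subst hz
      exact ⟨hxm.2, le_rfl⟩
    have htend : Tendsto (fun x => ENNReal.ofReal (s p - s x)) (𝓝[Ioo q p] p) (𝓝 0) := by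
      have h1 : Tendsto s (𝓝[Ioo q p] p) (𝓝 (s p)) :=
        (hsc p hp).mono_left (nhdsWithin_mono p hsubqp)
      have h2 : Tendsto (fun x => s p - s x) (𝓝[Ioo q p] p) (𝓝 0) := by
        have := (tendsto_const_nhds (x := s p) (f := 𝓝[Ioo q p] p)).sub h1
        simpa using this
      have := (ENNReal.continuous_ofReal.tendsto 0).comp h2
      simpa [Function.comp_def] using this
    have hle := ge_of_tendsto htend hev
    simpa using hle
  have hIocIoo : ∀ (G' : Set ℝ) (x : ℝ), ∀ y ∈ Ioo a b, ν (G' ∩ Ioc x y) = ν (G' ∩ Ioo x y) := by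
    intro G' x y hy
    apply le_antisymm
    · calc ν (G' ∩ Ioc x y) ≤ ν ((G' ∩ Ioo x y) ∪ {y}) := by
            apply measure_mono
            rintro z ⟨hz1, hz2, hz3⟩
            rcases eq_or_lt_of_le hz3 with h | h
            · exact Or.inr h
            · exact Or.inl ⟨hz1, hz2, h⟩
        _ ≤ ν (G' ∩ Ioo x y) + ν {y} := measure_union_le _ _
        _ = ν (G' ∩ Ioo x y) := by rw [hatom y hy, add_zero]
    · exact measure_mono (inter_subset_inter_right _ Ioo_subset_Ioc_self)
  -- interval [c', d']
  set c' : ℝ := (a + c) / 2 with hc'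
  set d' : ℝ := (d + b) / 2 with hd'
  have hac' : a < c' := by rw [hc']; linarith
  have hc'c : c' < c := by rw [hc']; linarith
  have hdd' : d < d' := by rw [hd']; linarith
  have hd'b : d' < b := by rw [hd']; linarith
  have hc'd' : c' < d' := by linarith
  have hIO : Icc c' d' ⊆ Ioo a b := fun x hx => ⟨lt_of_lt_of_le hac' hx.1, lt_of_le_of_lt hx.2 hd'b⟩
  have hIoocd : Ioo c d ⊆ Icc c' d' := fun x hx => ⟨(hc'c.trans hx.1).le, (hx.2.trans hdd').le⟩
  set S : Set ℝ := s₂ '' G₁ with hS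
  have Smeas : MeasurableSet S :=
    hG₁m.image_of_continuousOn_injOn (hcont₂.mono hG₁I) (hmono₂.injOn.mono hG₁I)
  have hKP := key_push ν a b c' d' hac' hc'd' hd'b s₂ hmono₂ hcont₂ G₂ hG₂I
    (fun x hx y hy hxy => hd₂ x (hIO hx) y (hIO hy) hxy)
    (fun x hx y hy => hfin2 x (hIO hx) y (hIO hy)) G₁ hG₁m hsub
  have hs₂e : s₂ e = 0 := by
    have := (hs₂ e).1 le_rfl
    simpa using this
  have heIcc : e ∈ Icc c' d' := hIoocd he
  have hcIcc : c ∈ Icc c' d' := ⟨hc'c.le, by linarith⟩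
  have hdIcc : d ∈ Icc c' d' := ⟨by linarith, hdd'.le⟩
  -- integral evaluation
  have hintS : ∀ p q : ℝ, p ≤ q →
      (∫ z in p..q, S.indicator (fun _ => (1:ℝ)) z) = (volume (S ∩ Ioc p q)).toReal := by
    intro p q hpq
    rw [intervalIntegral.integral_of_le hpq, MeasureTheory.integral_indicator Smeas,
      MeasureTheory.setIntegral_const, measureReal_restrict_apply Smeas]
    simp [measureReal_def]
  constructor
  · -- Part 1
    intro y hy
    have hyab : y ∈ Ioo a b := hIoosub hy
    have hyIcc : y ∈ Icc c' d' := hIoocd hy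
    rcases le_total e y with hey | hye
    · have h0y : (0:ℝ) ≤ s₂ y := by
        have := hd₂ e heab y hyab hey
        rw [hs₂e] at this
        have h2 := ENNReal.toReal_nonneg (a := ν (G₂ ∩ Ioc e y))
        linarith
      rw [hintS 0 (s₂ y) h0y, ← hs₂e, hKP e heIcc y hyIcc]
      exact (hs₁ y).1 hey
    · have h0y : s₂ y ≤ 0 := by
        have := hd₂ y hyab e heab hye
        rw [hs₂e] at this
        have h2 := ENNReal.toReal_nonneg (a := ν (G₂ ∩ Ioc y e))
        linarith
      rw [intervalIntegral.integral_symm, hintS (s₂ y) 0 h0y, ← hs₂e, hKP y hyIcc e heIcc]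
      exact (hs₁ y).2 hye
  · -- Part 2
    intro hCD
    set f : ℝ → ℝ := fun x => ∫ z in (0:ℝ)..x, S.indicator (fun _ => (1:ℝ)) z with hf
    have hii : ∀ p q : ℝ, IntervalIntegrable (S.indicator fun _ => (1:ℝ)) volume p q := by
      intro p q
      rw [intervalIntegrable_iff]
      rw [IntegrableOn, MeasureTheory.integrable_indicator_iff Smeas]
      rw [IntegrableOn, integrable_const_iff]
      right
      rw [isFiniteMeasure_restrict, Measure.restrict_apply Smeas]
      exact (lt_of_le_of_lt (measure_mono inter_subset_right) (measure_Ioc_lt_top (μ := volume) (a := min p q) (b := max p q))).ne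
    have hfe : ∀ u v : ℝ, u ≤ v → f v - f u = (volume (S ∩ Ioc u v)).toReal := by
      intro u v huv
      rw [hf]
      simp only
      rw [intervalIntegral.integral_interval_sub_left (hii 0 v) (hii 0 u)]
      exact hintS u v huv
    set J : Set ℝ := Ioo (s₂ c) (s₂ d) with hJ
    have hJopen : IsOpen J := isOpen_Ioo
    have hderivcont : ContinuousOn (deriv f) J :=
      hCD.continuousOn_deriv_of_isOpen hJopen le_rfl
    have hderiv : ∀ x ∈ J, HasDerivAt f (deriv f x) x := fun x hx =>
      ((hCD.differentiableOn one_ne_zero).differentiableAt (hJopen.mem_nhds hx)).hasDerivAt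
    -- volume facts
    have hSJle : volume (S ∩ J) ≤ ν (G₁ ∩ Ioo c d) := by
      calc volume (S ∩ J) ≤ volume (S ∩ Ioc (s₂ c) (s₂ d)) :=
            measure_mono (inter_subset_inter_right _ Ioo_subset_Ioc_self)
        _ = ν (G₁ ∩ Ioc c d) := hKP c hcIcc d hdIcc
        _ = ν (G₁ ∩ Ioo c d) := hIocIoo G₁ c d hdab
    have hJvol : volume J = ν (G₂ ∩ Ioo c d) := by
      rw [hJ, Real.volume_Ioo, hd₂ c hcab d hdab hcd.le,
        ENNReal.ofReal_toReal (hfin2 c hcab d hdab), hIocIoo G₂ c d hdab]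
    have hJfin : volume J ≠ ⊤ := by
      rw [hJvol, ← hIocIoo G₂ c d hdab]
      exact hfin2 c hcab d hdab
    have hWpos : 0 < volume (J \ S) := by
      have h1 : volume (J \ S) = volume J - volume (S ∩ J) := by
        rw [show J \ S = J \ (S ∩ J) from (diff_inter_self_eq_diff).symm]
        exact measure_diff inter_subset_right (Smeas.inter measurableSet_Ioo).nullMeasurableSet
          (ne_top_of_le_ne_top hJfin (measure_mono inter_subset_right))
      rw [h1]
      rw [tsub_pos_iff_lt]
      calc volume (S ∩ J) ≤ ν (G₁ ∩ Ioo c d) := hSJle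
        _ < ν (G₂ ∩ Ioo c d) := hlt
        _ = volume J := hJvol.symm
    obtain ⟨x₀, hx₀W, hx₀dens⟩ := exists_density_point (J \ S)
      (measurableSet_Ioo.diff Smeas) hWpos
    have hx₀J : x₀ ∈ J := hx₀W.1
    have hd0 : deriv f x₀ = 0 := by
      apply aux_deriv_zero f S (J \ S) x₀ _ (measurableSet_Ioo.diff Smeas) ?_ hfe
        (hderiv x₀ hx₀J) hx₀dens
      filter_upwards [eventually_mem_nhdsWithin] with r hr
      intro z hz
      constructor
      · rw [Real.closedBall_eq_Icc]
        exact ⟨hz.2.1.le, hz.2.2⟩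
      · intro hzW
        exact hzW.2 hz.1
    have hcontAt : ContinuousAt (deriv f) x₀ :=
      (hderivcont x₀ hx₀J).continuousAt (hJopen.mem_nhds hx₀J)
    have hev : ∀ᶠ y in 𝓝 x₀, deriv f y < 1/2 ∧ y ∈ J := by
      have h1 : ∀ᶠ y in 𝓝 x₀, deriv f y < 1/2 := by
        have h2 : Tendsto (deriv f) (𝓝 x₀) (𝓝 (deriv f x₀)) := hcontAt
        rw [hd0] at h2
        exact h2.eventually_lt_const (by norm_num)
      exact h1.and (eventually_of_mem (hJopen.mem_nhds hx₀J) (fun y hy => hy))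
    obtain ⟨δ, hδ, hball⟩ := Metric.eventually_nhds_iff_ball.mp hev
    set α : ℝ := x₀ - δ/2 with hα
    set β : ℝ := x₀ + δ/2 with hβ
    have hαβ : Ioo α β ⊆ ball x₀ δ := by
      rw [Real.ball_eq_Ioo]
      exact Ioo_subset_Ioo (by rw [hα]; linarith) (by rw [hβ]; linarith)
    have hαJ : α ∈ J := (hball α (by rw [Real.ball_eq_Ioo]; constructor <;> [skip; skip] <;> simp [hα] <;> linarith)).2
    have hβJ : β ∈ J := (hball β (by rw [Real.ball_eq_Ioo]; constructor <;> [skip; skip] <;> simp [hβ] <;> linarith)).2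
    have hsurJ : Ioo (s₂ c) (s₂ d) ⊆ s₂ '' Ioo c d :=
      intermediate_value_Ioo hcd.le (hcont₂.mono (fun x hx => ⟨hac.trans_le hx.1, hx.2.trans_lt hdb⟩))
    obtain ⟨u, huIoo, hsu⟩ := hsurJ hαJ
    obtain ⟨v, hvIoo, hsv⟩ := hsurJ hβJ
    have huab : u ∈ Ioo a b := hIoosub huIoo
    have hvab : v ∈ Ioo a b := hIoosub hvIoo
    have hαβlt : α < β := by rw [hα, hβ]; linarith
    have huv : u < v := by
      by_contra hle
      push_neg at hle
      have := hm₂ hvab huab hle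
      rw [hsu, hsv] at this
      linarith
    have hSU : 0 < volume (S ∩ Ioo α β) := by
      have h1 : volume (S ∩ Ioc α β) = ν (G₁ ∩ Ioc u v) := by
        rw [← hsu, ← hsv]
        exact hKP u (hIoocd huIoo) v (hIoocd hvIoo)
      have h2 : 0 < ν (G₁ ∩ Ioc u v) :=
        lt_of_lt_of_le (hpos₁ u huab v hvab huv)
          (measure_mono (inter_subset_inter_right _ Ioo_subset_Ioc_self))
      have h3 : volume (S ∩ Ioc α β) ≤ volume (S ∩ Ioo α β) := by
        calc volume (S ∩ Ioc α β) ≤ volume ((S ∩ Ioo α β) ∪ {β}) := by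
              apply measure_mono
              rintro z ⟨hz1, hz2, hz3⟩
              rcases eq_or_lt_of_le hz3 with h | h
              · exact Or.inr h
              · exact Or.inl ⟨hz1, hz2, h⟩
          _ ≤ volume (S ∩ Ioo α β) + volume {β} := measure_union_le _ _
          _ = volume (S ∩ Ioo α β) := by simp
      calc (0:ENNReal) < ν (G₁ ∩ Ioc u v) := h2
        _ = volume (S ∩ Ioc α β) := h1.symm
        _ ≤ volume (S ∩ Ioo α β) := h3
    obtain ⟨x₁, hx₁T, hx₁dens⟩ := exists_density_point (S ∩ Ioo α β)
      (Smeas.inter measurableSet_Ioo) hSU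
    have hx₁ball : x₁ ∈ ball x₀ δ := hαβ hx₁T.2
    have hx₁J : x₁ ∈ J := (hball x₁ hx₁ball).2
    have hd1 : deriv f x₁ = 1 :=
      aux_deriv_one f S (S ∩ Ioo α β) x₁ _ inter_subset_left hfe (hderiv x₁ hx₁J) hx₁dens
    have := (hball x₁ hx₁ball).1
    rw [hd1] at this
    norm_num at this
end
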